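/- arXiv:2304.07798 — 2 statements merged into one kernel-verified Lean document; each statement's English description precedes it below -/
import Mathlib

section
/- Assume G is an elementary abelian 2-group and {g,h,i} = {1,2,3}. Then E_g*A_hE_i*A_gE_h* = E_g*A_iE_h*. -/
open Matrix

abbrev XG (G : Type) [Group G] : Type := {v : Fin 3 → G // v 0 * v 1 = v 2}

def cIdx : Fin 5 → Fin 3
  | 0 => 0
  | 1 => 0
  | 2 => 1
  | 3 => 2
  | 4 => 0

def rel {G : Type} [Group G] (i : Fin 5) (y z : XG G) : Prop :=
  if i = 0 then y = z
  else if i = 4 then ∀ d : Fin 3, y.1 d ≠ z.1 d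
  else y ≠ z ∧ y.1 (cIdx i) = z.1 (cIdx i)

instance {G : Type} [Group G] [DecidableEq G] (i : Fin 5) (y z : XG G) :
    Decidable (rel i y z) := by
  unfold rel
  infer_instance

def Adj (F : Type) [Field F] {G : Type} [Group G] [DecidableEq G] (i : Fin 5) :
    Matrix (XG G) (XG G) F :=
  Matrix.of fun y z => if rel i y z then 1 else 0

def DualE (F : Type) [Field F] {G : Type} [Group G] [DecidableEq G] (x : XG G) (i : Fin 5) :
    Matrix (XG G) (XG G) F :=
  Matrix.of fun y z => if y = z ∧ rel i x y then 1 else 0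

def AllOne (F : Type) [Field F] (G : Type) [Group G] : Matrix (XG G) (XG G) F :=
  Matrix.of fun _ _ => 1

def genSet (F : Type) [Field F] (G : Type) [Group G] [Fintype G] [DecidableEq G]
    (x : XG G) : Set (Matrix (XG G) (XG G) F) :=
  {M | ∃ a b c : Fin 5, M = DualE F x a * Adj F b * DualE F x c}

def TerwilligerAlg (F : Type) [Field F] (G : Type) [Group G] [Fintype G] [DecidableEq G]
    (x : XG G) : Subalgebra F (Matrix (XG G) (XG G) F) :=
  Algebra.adjoin F (genSet F G x)

set_option linter.unusedSectionVars false
section helpers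
variable {G : Type} [Group G]

lemma my_sq (helem : ∀ a : G, a ^ 2 = 1) : ∀ a : G, a * a = 1 := by
  intro a; have := helem a; rwa [pow_two] at this

lemma my_inv (helem : ∀ a : G, a ^ 2 = 1) : ∀ a : G, a⁻¹ = a :=
  fun a => inv_eq_of_mul_eq_one_right (my_sq helem a)

lemma my_comm (helem : ∀ a : G, a ^ 2 = 1) : ∀ a b : G, a * b = b * a := by
  intro a b
  calc a * b = (a * b)⁻¹ := (my_inv helem _).symm
    _ = b⁻¹ * a⁻¹ := mul_inv_rev a b
    _ = b * a := by rw [my_inv helem, my_inv helem]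

lemma my_sq' (helem : ∀ a : G, a ^ 2 = 1) : ∀ a b : G, a * (a * b) = b := by
  intro a b; rw [← mul_assoc, my_sq helem, one_mul]

lemma my_left_comm (helem : ∀ a : G, a ^ 2 = 1) : ∀ a b c : G, a * (b * c) = b * (a * c) := by
  intro a b c; rw [← mul_assoc, my_comm helem a b, mul_assoc]

/-- Trichotomy for distinct elements of `Fin 3`. -/
lemma tri : ∀ a b c d : Fin 3, a ≠ b → b ≠ c → a ≠ c → d = a ∨ d = b ∨ d = c := by decide

/-- Each coordinate of a triple is the product of the other two. -/
lemma coord (helem : ∀ a : G, a ^ 2 = 1) (u : XG G) {d e f : Fin 3}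
    (h1 : d ≠ e) (h2 : e ≠ f) (h3 : d ≠ f) : u.1 f = u.1 d * u.1 e := by
  have hu := u.2
  fin_cases d <;> fin_cases e <;> fin_cases f <;> simp_all
  all_goals try rw [← hu]
  all_goals first
    | rfl
    | exact (my_sq' helem _ _).symm
    | exact my_comm helem _ _
    | (rw [my_comm helem (u.1 0) (u.1 1)]; exact (my_sq' helem _ _).symm)
    | (rw [my_comm helem (u.1 0 * u.1 1) (u.1 0)]; exact (my_sq' helem _ _).symm)
    | rw [mul_assoc, my_sq helem, mul_one]


/-- Two triples agreeing in two distinct coordinates are equal. -/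
lemma ext_two (helem : ∀ a : G, a ^ 2 = 1) {u v : XG G} {a b c : Fin 3}
    (hab : a ≠ b) (hbc : b ≠ c) (hac : a ≠ c)
    (h1 : u.1 a = v.1 a) (h2 : u.1 b = v.1 b) : u = v := by
  have h3 : u.1 c = v.1 c := by
    rw [coord helem u hab hbc hac, coord helem v hab hbc hac, h1, h2]
  apply Subtype.ext; funext d
  rcases tri a b c d hab hbc hac with rfl | rfl | rfl <;> assumption

end helpers

section core
variable {F : Type} [Field F] {G : Type} [Group G] [Fintype G] [DecidableEq G]

lemma mul_mem (helem : ∀ a : G, a ^ 2 = 1) (u v : XG G) :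
    (fun d => u.1 d * v.1 d) 0 * (fun d => u.1 d * v.1 d) 1 = (fun d => u.1 d * v.1 d) 2 := by
  simp only
  rw [mul_assoc, my_left_comm helem (v.1 0) (u.1 1) (v.1 1), ← mul_assoc, u.2, v.2]

lemma core (helem : ∀ a : G, a ^ 2 = 1) (x y z : XG G) {a b c : Fin 3}
    (hab : a ≠ b) (hbc : b ≠ c) (hac : a ≠ c)
    (hxy : x ≠ y) (hxya : x.1 a = y.1 a)
    (hxz : x ≠ z) (hxzb : x.1 b = z.1 b) :
    (∑ w : XG G, (if (y ≠ w ∧ y.1 b = w.1 b) ∧ (x ≠ w ∧ x.1 c = w.1 c) ∧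
        (w ≠ z ∧ w.1 a = z.1 a) then (1 : F) else 0)) =
      if y ≠ z ∧ y.1 c = z.1 c then 1 else 0 := by
  -- coordinate disagreement facts
  have hxyb : x.1 b ≠ y.1 b := fun hh => hxy (ext_two helem hab hbc hac hxya hh)
  have hxyc : x.1 c ≠ y.1 c := fun hh => hxy (ext_two helem hac hbc.symm hab hxya hh)
  have hxza : x.1 a ≠ z.1 a := fun hh => hxz (ext_two helem hab.symm hac hbc hxzb hh)
  have hyz : y ≠ z := by
    intro hh; apply hxza; rw [hxya, hh]
  -- the key algebraic identity
  have h1 : y.1 b * x.1 c = x.1 b * y.1 c := by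
    rw [coord helem y hac hbc.symm hab, coord helem x hab hbc hac, ← hxya,
      mul_assoc, my_left_comm helem (y.1 c) (x.1 a) (x.1 b), my_sq' helem,
      my_comm helem (y.1 c) (x.1 b)]
  have h2 : z.1 a = x.1 b * z.1 c := by
    rw [coord helem z hbc (Ne.symm hac) (Ne.symm hab), ← hxzb]
  have hkey : (y.1 b * x.1 c = z.1 a) ↔ (y.1 c = z.1 c) := by
    rw [h1, h2, mul_right_inj]
  by_cases hc : y.1 c = z.1 c
  · -- unique solution: the pointwise product x·y·z
    let yz : XG G := ⟨fun d => y.1 d * z.1 d, mul_mem helem y z⟩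
    let w₀ : XG G := ⟨fun d => x.1 d * yz.1 d, mul_mem helem x yz⟩
    have hw0 : ∀ d, w₀.1 d = x.1 d * (y.1 d * z.1 d) := fun d => rfl
    have hwb : w₀.1 b = y.1 b := by
      rw [hw0, ← hxzb, my_comm helem (y.1 b) (x.1 b), my_sq' helem]
    have hwc : w₀.1 c = x.1 c := by
      rw [hw0, hc, my_sq helem, mul_one]
    have hwa : w₀.1 a = z.1 a := by
      rw [hw0, ← hxya, my_sq' helem]
    have hiff : ∀ w : XG G, ((y ≠ w ∧ y.1 b = w.1 b) ∧ (x ≠ w ∧ x.1 c = w.1 c) ∧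
        (w ≠ z ∧ w.1 a = z.1 a)) ↔ w = w₀ := by
      intro w
      constructor
      · rintro ⟨⟨_, hyb⟩, ⟨_, hxc⟩, ⟨_, hwa'⟩⟩
        apply Subtype.ext; funext d
        rcases tri a b c d hab hbc hac with rfl | rfl | rfl
        · rw [hwa', hwa]
        · rw [← hyb, hwb]
        · rw [← hxc, hwc]
      · rintro rfl
        refine ⟨⟨?_, hwb.symm⟩, ⟨?_, hwc.symm⟩, ⟨?_, hwa⟩⟩
        · intro hh; exact hxyc (by rw [hh, hwc])
        · intro hh; exact hxyb (by rw [hh, hwb])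
        · intro hh; exact hxyb (by rw [hxzb, ← hh, hwb])
    rw [if_pos ⟨hyz, hc⟩]
    simp only [hiff]
    simp
  · rw [if_neg (fun hh => hc hh.2)]
    apply Finset.sum_eq_zero
    intro w _
    rw [if_neg]
    rintro ⟨⟨_, hyb⟩, ⟨_, hxc⟩, ⟨_, hwa⟩⟩
    apply hc
    apply hkey.mp
    rw [hyb, hxc, ← hwa]
    exact (coord helem w hbc (Ne.symm hac) (Ne.symm hab)).symm

end core

section mtx
variable {F : Type} [Field F] {G : Type} [Group G] [Fintype G] [DecidableEq G]

omit [Fintype G] in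
lemma rel_eq (i0 : Fin 5) (h0 : i0 ≠ 0) (h4 : i0 ≠ 4) (u v : XG G) :
    rel i0 u v ↔ u ≠ v ∧ u.1 (cIdx i0) = v.1 (cIdx i0) := by
  simp [rel, h0, h4]

lemma mul_dualE_apply (x : XG G) (M : Matrix (XG G) (XG G) F) (e : Fin 5) (y z : XG G) :
    (M * DualE F x e) y z = if rel e x z then M y z else 0 := by
  rw [Matrix.mul_apply, Finset.sum_eq_single z]
  · by_cases hr : rel e x z <;> simp [DualE, hr]
  · intro w _ hw
    have : ¬(w = z ∧ rel e x w) := fun hh => hw hh.1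
    simp [DualE, this]
  · simp

lemma dualE_mul_apply (x : XG G) (M : Matrix (XG G) (XG G) F) (e : Fin 5) (y z : XG G) :
    (DualE F x e * M) y z = if rel e x y then M y z else 0 := by
  rw [Matrix.mul_apply, Finset.sum_eq_single y]
  · by_cases hr : rel e x y <;> simp [DualE, hr]
  · intro w _ hw
    have : ¬(y = w ∧ rel e x y) := fun hh => hw hh.1.symm
    simp [DualE, this]
  · simp

lemma main (x : XG G) (helem : ∀ a : G, a ^ 2 = 1) (g h i : Fin 5)
    (hg0 : g ≠ 0) (hg4 : g ≠ 4) (hh0 : h ≠ 0) (hh4 : h ≠ 4) (hi0 : i ≠ 0) (hi4 : i ≠ 4)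
    (hab : cIdx g ≠ cIdx h) (hbc : cIdx h ≠ cIdx i) (hac : cIdx g ≠ cIdx i) :
    DualE F x g * Adj F h * DualE F x i * Adj F g * DualE F x h =
      DualE F x g * Adj F i * DualE F x h := by
  have assoc1 : DualE F x g * Adj F h * DualE F x i * Adj F g =
      DualE F x g * (Adj F h * DualE F x i * Adj F g) := by
    rw [mul_assoc, mul_assoc, mul_assoc]
  ext y z
  rw [mul_dualE_apply, mul_dualE_apply, assoc1, dualE_mul_apply, dualE_mul_apply]
  by_cases hz : rel h x z
  · rw [if_pos hz, if_pos hz]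
    by_cases hy : rel g x y
    · rw [if_pos hy, if_pos hy]
      -- the inner entry computation
      rw [rel_eq g hg0 hg4] at hy
      rw [rel_eq h hh0 hh4] at hz
      have hsum : ((Adj F h * DualE F x i * Adj F g : Matrix (XG G) (XG G) F)) y z =
          ∑ w : XG G, (if (y ≠ w ∧ y.1 (cIdx h) = w.1 (cIdx h)) ∧
            (x ≠ w ∧ x.1 (cIdx i) = w.1 (cIdx i)) ∧
            (w ≠ z ∧ w.1 (cIdx g) = z.1 (cIdx g)) then (1 : F) else 0) := by
        rw [Matrix.mul_apply]
        apply Finset.sum_congr rfl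
        intro w _
        rw [mul_dualE_apply]
        simp only [Adj, Matrix.of_apply]
        simp only [rel_eq g hg0 hg4, rel_eq h hh0 hh4, rel_eq i hi0 hi4]
        by_cases h1 : x ≠ w ∧ x.1 (cIdx i) = w.1 (cIdx i) <;>
          by_cases h2 : y ≠ w ∧ y.1 (cIdx h) = w.1 (cIdx h) <;>
          by_cases h3 : w ≠ z ∧ w.1 (cIdx g) = z.1 (cIdx g) <;>
          simp [h1, h2, h3]
      rw [hsum, core helem x y z hab hbc hac hy.1 hy.2 hz.1 hz.2]
      simp [Adj, rel_eq i hi0 hi4]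
    · rw [if_neg hy, if_neg hy]
  · rw [if_neg hz, if_neg hz]

end mtx

theorem stmt10 (F : Type) [Field F] (G : Type) [Group G] [Fintype G] [DecidableEq G]
    (helem : ∀ a : G, a ^ 2 = 1) (hcard : 3 ≤ Fintype.card G)
    (x : XG G) (g h i : Fin 5)
    (hghi : ({g, h, i} : Finset (Fin 5)) = {1, 2, 3}) :
    DualE F x g * Adj F h * DualE F x i * Adj F g * DualE F x h =
      DualE F x g * Adj F i * DualE F x h := by
  
  fin_cases g <;> fin_cases h <;> fin_cases i <;>
    first
      | exact absurd hghi (by decide)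
      | exact main x helem _ _ _ (by decide) (by decide) (by decide) (by decide) (by decide)
          (by decide) (by decide) (by decide) (by decide)
end

section
/- Assume G is an elementary abelian 2-group with |G| = n and {g,h,i} = {1,2,3}. Then, writing M = E_4*A_gE_h*A_iE_4* and n̄−2̄ for the image of the integer n−2 in F: (i) M·E_4*A_gE_h*A_iE_4* = E_4*JE_4* − E_4*A_gE_h*A_iE_4*; (ii) M·E_4*A_gE_i*A_hE_4* = E_4*JE_4* − E_4*A_gE_i*A_hE_4*; (iii) M·E_4*A_hE_g*A_iE_4* = E_4*JE_4* − E_4*A_gE_h*A_iE_4*; (iv) M·E_4*A_hE_i*A_gE_4* = E_4*JE_4* − E_4* − E_4*A_gE_4*; (v) M·E_4*A_iE_g*A_hE_4* = (n−2)̄·E_4*A_gE_i*A_hE_4*; (vi) M·E_4*A_iE_h*A_gE_4* = (n−2)̄·E_4* + (n−2)̄·E_4*A_gE_4*. -/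
open Matrix

lemma cover3 : ∀ a b c : Fin 3, a ≠ b → a ≠ c → b ≠ c → ∀ d : Fin 3, d = a ∨ d = b ∨ d = c := by
  decide

section Basic
variable {G : Type} [Group G] (helem : ∀ a : G, a ^ 2 = 1)
include helem

lemma sq1 (a : G) : a * a = 1 := by have := helem a; rwa [pow_two] at this

lemma ginv (a : G) : a⁻¹ = a := inv_eq_of_mul_eq_one_right (sq1 helem a)

lemma gcomm (a b : G) : a * b = b * a := by
  calc a * b = (a * b)⁻¹ := (ginv helem _).symm
    _ = b⁻¹ * a⁻¹ := mul_inv_rev _ _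
    _ = b * a := by rw [ginv helem, ginv helem]

lemma cancel_left {a b c : G} : a * b = c ↔ b = a * c := by
  constructor
  · rintro rfl; rw [← mul_assoc, sq1 helem, one_mul]
  · rintro rfl; rw [← mul_assoc, sq1 helem, one_mul]

lemma cancel_right {a b c : G} : a * b = c ↔ a = c * b := by
  constructor
  · rintro rfl; rw [mul_assoc, sq1 helem, mul_one]
  · rintro rfl; rw [mul_assoc, sq1 helem, mul_one]

lemma triple (y : XG G) (a b c : Fin 3) (hab : a ≠ b) (hac : a ≠ c) (hbc : b ≠ c) :
    y.1 a * y.1 b = y.1 c := by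
  have h2 := y.2
  have t021 : y.1 0 * y.1 2 = y.1 1 := by
    rw [← h2, ← mul_assoc, sq1 helem, one_mul]
  have t120 : y.1 1 * y.1 2 = y.1 0 := by
    rw [← h2, gcomm helem (y.1 0) (y.1 1), ← mul_assoc, sq1 helem, one_mul]
  fin_cases a <;> fin_cases b <;> fin_cases c <;> simp_all <;>
    first
      | exact h2 | exact t021 | exact t120
      | (rw [gcomm helem]; first | exact h2 | exact t021 | exact t120)

lemma ext2 {y z : XG G} (a b : Fin 3) (hab : a ≠ b)
    (ha : y.1 a = z.1 a) (hb : y.1 b = z.1 b) : y = z := by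
  apply Subtype.ext; funext d
  by_cases hda : d = a
  · subst hda; exact ha
  by_cases hdb : d = b
  · subst hdb; exact hb
  · rw [← triple helem y a b d hab (Ne.symm hda) (Ne.symm hdb),
        ← triple helem z a b d hab (Ne.symm hda) (Ne.symm hdb), ha, hb]

lemma exists2 (a c : Fin 3) (hac : a ≠ c) (α γ : G) :
    ∃ v : XG G, v.1 a = α ∧ v.1 c = γ := by
  fin_cases a <;> fin_cases c
  · exact absurd rfl hac
  · exact ⟨⟨![α, γ, α * γ], rfl⟩, rfl, rfl⟩
  · exact ⟨⟨![α, α * γ, γ], by simp [← mul_assoc, sq1 helem]⟩, rfl, rfl⟩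
  · exact ⟨⟨![γ, α, γ * α], rfl⟩, rfl, rfl⟩
  · exact absurd rfl hac
  · exact ⟨⟨![γ * α, α, γ], by simp [mul_assoc, sq1 helem]⟩, rfl, rfl⟩
  · exact ⟨⟨![γ, γ * α, α], by simp [← mul_assoc, sq1 helem]⟩, rfl, rfl⟩
  · exact ⟨⟨![α * γ, γ, α], by simp [mul_assoc, sq1 helem]⟩, rfl, rfl⟩
  · exact absurd rfl hac

end Basic

section Mat
set_option linter.unusedSectionVars false
variable {F : Type} [Field F] {G : Type} [Group G] [Fintype G] [DecidableEq G] (x : XG G)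

lemma rel4_iff (y z : XG G) : rel 4 y z ↔ ∀ d : Fin 3, y.1 d ≠ z.1 d := by
  simp [rel]

lemma rel_iff {p : Fin 5} (hp0 : p ≠ 0) (hp4 : p ≠ 4) (y z : XG G) :
    rel p y z ↔ y ≠ z ∧ y.1 (cIdx p) = z.1 (cIdx p) := by
  simp [rel, hp0, hp4]

lemma DualE_mul_apply (i : Fin 5) (A : Matrix (XG G) (XG G) F) (y z : XG G) :
    (DualE F x i * A) y z = if rel i x y then A y z else 0 := by
  rw [Matrix.mul_apply]
  simp only [DualE, Matrix.of_apply, ite_mul, one_mul, zero_mul]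
  by_cases h : rel i x y
  · simp [h]
  · simp [h]

lemma mul_DualE_apply (i : Fin 5) (A : Matrix (XG G) (XG G) F) (y z : XG G) :
    (A * DualE F x i) y z = if rel i x z then A y z else 0 := by
  rw [Matrix.mul_apply]
  have hw : ∀ w : XG G, A y w * DualE F x i w z
      = if w = z then (if rel i x z then A y z else 0) else 0 := by
    intro w
    by_cases hwz : w = z
    · subst hwz; by_cases h : rel i x w <;> simp [DualE, h]
    · simp [DualE, hwz]
  simp only [hw]
  rw [Finset.sum_ite_eq' Finset.univ z]
  simp

lemma entryE (i : Fin 5) (y z : XG G) :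
    (DualE F x i : Matrix (XG G) (XG G) F) y z = if y = z ∧ rel i x y then 1 else 0 := rfl

lemma entryJ (y z : XG G) :
    (DualE F x 4 * AllOne F G * DualE F x 4 : Matrix (XG G) (XG G) F) y z
      = if rel 4 x y ∧ rel 4 x z then (1 : F) else 0 := by
  rw [mul_DualE_apply, DualE_mul_apply]
  by_cases h1 : rel 4 x y <;> by_cases h2 : rel 4 x z <;> simp [h1, h2, AllOne]

lemma entryA (p : Fin 5) (y z : XG G) :
    (DualE F x 4 * Adj F p * DualE F x 4 : Matrix (XG G) (XG G) F) y z
      = if rel 4 x y ∧ rel 4 x z ∧ rel p y z then (1 : F) else 0 := by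
  rw [mul_DualE_apply, DualE_mul_apply]
  by_cases h1 : rel 4 x y <;> by_cases h2 : rel 4 x z <;>
    simp [h1, h2, Adj, and_comm]

lemma entry5 (p q r : Fin 5) (y z : XG G) :
    (DualE F x 4 * Adj F p * DualE F x q * Adj F r * DualE F x 4 : Matrix (XG G) (XG G) F) y z
      = if rel 4 x y ∧ rel 4 x z then
          ∑ w : XG G, (if rel p y w ∧ rel q x w ∧ rel r w z then (1:F) else 0)
        else 0 := by
  rw [mul_DualE_apply, Matrix.mul_apply]
  by_cases h2 : rel 4 x z
  · simp only [h2, if_true]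
    by_cases h1 : rel 4 x y
    · simp only [h1, true_and, if_true]
      apply Finset.sum_congr rfl
      intro w _
      rw [mul_DualE_apply, DualE_mul_apply]
      by_cases hq : rel q x w <;> by_cases hp : rel p y w <;> by_cases hr : rel r w z <;>
        simp [hp, hq, hr, h1, Adj]
    · simp only [h1, false_and, if_false]
      apply Finset.sum_eq_zero
      intro w _
      rw [mul_DualE_apply, DualE_mul_apply]
      simp [h1]
  · simp [h2]

end Mat

section Core
set_option linter.unusedSectionVars false
variable {F : Type} [Field F] {G : Type} [Group G] [Fintype G] [DecidableEq G]
  (helem : ∀ a : G, a ^ 2 = 1) (x : XG G)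
include helem

lemma entryN {p q r : Fin 5} (hp0 : p ≠ 0) (hp4 : p ≠ 4) (hq0 : q ≠ 0) (hq4 : q ≠ 4)
    (hr0 : r ≠ 0) (hr4 : r ≠ 4)
    (hpq : cIdx p ≠ cIdx q) (hpr : cIdx p ≠ cIdx r) (hqr : cIdx q ≠ cIdx r) (y z : XG G) :
    (DualE F x 4 * Adj F p * DualE F x q * Adj F r * DualE F x 4 : Matrix (XG G) (XG G) F) y z
      = if rel 4 x y ∧ rel 4 x z ∧ z.1 (cIdx r) * y.1 (cIdx p) = x.1 (cIdx q)
        then 1 else 0 := by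
  rw [entry5]
  by_cases h1 : rel 4 x y
  swap
  · simp [h1]
  by_cases h2 : rel 4 x z
  swap
  · simp [h2]
  simp only [h1, h2, true_and, if_true]
  set a := cIdx p with ha
  set b := cIdx q with hb
  set c := cIdx r with hc
  obtain ⟨v₀, hva, hvc⟩ := exists2 helem a c hpr (y.1 a) (z.1 c)
  have hy4 := (rel4_iff x y).1 h1
  have hz4 := (rel4_iff x z).1 h2
  have hvb : v₀.1 b = z.1 c * y.1 a := by
    rw [← triple helem v₀ a c b hpr hpq (Ne.symm hqr), hva, hvc, gcomm helem]
  have key : ∀ w : XG G, (rel p y w ∧ rel q x w ∧ rel r w z)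
      ↔ (z.1 c * y.1 a = x.1 b ∧ w = v₀) := by
    intro w
    rw [rel_iff hp0 hp4, rel_iff hq0 hq4, rel_iff hr0 hr4, ← ha, ← hb, ← hc]
    constructor
    · rintro ⟨⟨hyw, hwa⟩, ⟨hxw, hwb⟩, ⟨hwz, hwc⟩⟩
      have hwb' : w.1 b = z.1 c * y.1 a := by
        rw [← triple helem w c a b (Ne.symm hpr) (Ne.symm hqr) hpq, hwc, ← hwa]
      refine ⟨by rw [hwb, hwb'], ?_⟩
      exact ext2 helem a c hpr (by rw [← hwa, hva]) (by rw [hwc, hvc])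
    · rintro ⟨hcond, rfl⟩
      refine ⟨⟨?_, hva.symm⟩, ⟨?_, by rw [hvb]; exact hcond.symm⟩, ⟨?_, hvc⟩⟩
      · intro he; exact hy4 b (by rw [he, hvb]; exact hcond.symm)
      · intro he; exact hy4 a (by rw [he, hva])
      · intro he; exact hz4 b (by rw [← he, hvb]; exact hcond.symm)
  simp only [key]
  by_cases hcond : z.1 c * y.1 a = x.1 b
  · simp only [hcond, true_and]
    rw [Finset.sum_ite_eq' Finset.univ v₀ (fun _ => (1:F))]
    simp
  · simp [hcond]

lemma card_slice (a b c : Fin 3) (hab : a ≠ b) (hac : a ≠ c) (hbc : b ≠ c)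
    (γ : G) (hγ : γ ≠ x.1 c) :
    (Finset.univ.filter fun v : XG G => rel 4 x v ∧ v.1 c = γ).card
      = Fintype.card G - 2 := by
  have hne : x.1 a ≠ x.1 b * γ := by
    intro he
    exact hγ (by
      have := (cancel_left helem).1 he.symm
      rw [this, triple helem x b a c (Ne.symm hab) hbc hac])
  have htc : (Finset.univ \ {x.1 a, x.1 b * γ} : Finset G).card = Fintype.card G - 2 := by
    rw [Finset.card_sdiff_of_subset (Finset.subset_univ _), Finset.card_univ,
      Finset.card_pair hne]
  rw [← htc]
  apply Finset.card_bij' (fun v _ => v.1 a)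
    (fun s _ => (exists2 helem a c hac s γ).choose)
  · intro v hv
    rw [Finset.mem_filter] at hv
    obtain ⟨-, hv4, hvcγ⟩ := hv
    have hv4 := (rel4_iff x v).1 hv4
    simp only [Finset.mem_sdiff, Finset.mem_univ, Finset.mem_insert, Finset.mem_singleton,
      true_and]
    push_neg
    refine ⟨fun he => hv4 a he.symm, fun he => ?_⟩
    apply hv4 b
    rw [← triple helem v a c b hac hab (Ne.symm hbc), he, hvcγ, mul_assoc, sq1 helem, mul_one]
  · intro s hs
    simp only [Finset.mem_sdiff, Finset.mem_univ, Finset.mem_insert, Finset.mem_singleton,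
      true_and] at hs
    push_neg at hs
    obtain ⟨hs1, hs2⟩ := hs
    obtain ⟨hwa, hwc⟩ := (exists2 helem a c hac s γ).choose_spec
    rw [Finset.mem_filter]
    refine ⟨Finset.mem_univ _, ?_, hwc⟩
    rw [rel4_iff]
    intro d
    rcases cover3 a b c hab hac hbc d with hd | hd | hd <;> rw [hd]
    · rw [hwa]; exact fun he => hs1 he.symm
    · intro he
      apply hs2
      have h3 := triple helem (exists2 helem a c hac s γ).choose a c b hac hab (Ne.symm hbc)
      rw [hwa, hwc] at h3
      exact (cancel_right helem).1 (h3.trans he.symm)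
    · rw [hwc]; exact fun he => hγ he.symm
  · intro v hv
    rw [Finset.mem_filter] at hv
    obtain ⟨hwa, hwc⟩ := (exists2 helem a c hac (v.1 a) γ).choose_spec
    exact ext2 helem a c hac hwa (by rw [hwc, hv.2.2])
  · intro s hs
    exact (exists2 helem a c hac s γ).choose_spec.1

lemma sum_count (hn : 2 ≤ Fintype.card G) (a b c : Fin 3)
    (hab : a ≠ b) (hac : a ≠ c) (hbc : b ≠ c) (γ : G) (hγ : γ ≠ x.1 c) :
    (∑ v : XG G, if rel 4 x v ∧ v.1 c = γ then (1:F) else 0)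
      = ((Fintype.card G : ℤ) - 2 : ℤ) := by
  rw [Finset.sum_boole, card_slice helem x a b c hab hac hbc γ hγ]
  push_cast [Nat.cast_sub hn]
  ring

end Core

section Help
set_option linter.unusedSectionVars false
variable {F : Type} [Field F] {G : Type} [Group G] [Fintype G] [DecidableEq G]
  (helem : ∀ a : G, a ^ 2 = 1) (x : XG G)

lemma mul_ind (P Q : Prop) [Decidable P] [Decidable Q] :
    (if P then (1:F) else 0) * (if Q then 1 else 0) = if P ∧ Q then 1 else 0 := by
  by_cases hP : P <;> by_cases hQ : Q <;> simp [hP, hQ]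

include helem

lemma glcomm (a b c : G) : a * (b * c) = b * (a * c) := by
  rw [← mul_assoc, gcomm helem a b, mul_assoc]

lemma sq1' (a b : G) : a * (a * b) = b := by
  rw [← mul_assoc, sq1 helem, one_mul]

lemma eqm (s t : G) : s = t ↔ s * t = 1 := by
  constructor
  · rintro rfl; exact sq1 helem s
  · intro hh; rw [mul_eq_one_iff_eq_inv, ginv helem] at hh; exact hh

-- test AC normalization
example (u v w : G) : u * v * (w * u) * u = w * v * u := by
  simp only [mul_assoc, gcomm helem, glcomm helem, sq1 helem, sq1' helem, one_mul, mul_one]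

example (p q r s : G) : (p * q) * (r * p) * p = r * q * p := by
  simp only [mul_assoc, gcomm helem, glcomm helem, sq1 helem, sq1' helem, one_mul, mul_one]

lemma hbeta (d e f : Fin 3) (hfe : f ≠ e) (hfd : f ≠ d) (hed : e ≠ d)
    {z : XG G} (hz : rel 4 x z) : z.1 d * x.1 e ≠ x.1 f := by
  intro he
  have h1 := (cancel_right helem).1 he
  have ht : x.1 f * x.1 e = x.1 d := triple helem x f e d hfe hfd hed
  exact ((rel4_iff x z).1 hz) d (by rw [h1, ht])

lemma sum_unique (c a₂ b₂ : Fin 3) (hca : c ≠ a₂) (hcb : c ≠ b₂) (hab2 : a₂ ≠ b₂)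
    (γ₀ β₀ : G) (hγ : γ₀ ≠ x.1 c) (hβ : β₀ ≠ x.1 a₂) :
    (∑ v : XG G, if rel 4 x v ∧ v.1 c = γ₀ ∧ v.1 a₂ = β₀ then (1:F) else 0)
      = if γ₀ * β₀ = x.1 b₂ then 0 else 1 := by
  obtain ⟨v₀, hvc, hva⟩ := exists2 helem c a₂ hca γ₀ β₀
  have hvb : v₀.1 b₂ = γ₀ * β₀ := by
    rw [← triple helem v₀ c a₂ b₂ hca hcb hab2, hvc, hva]
  have key : ∀ v : XG G, (rel 4 x v ∧ v.1 c = γ₀ ∧ v.1 a₂ = β₀)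
      ↔ (¬(γ₀ * β₀ = x.1 b₂) ∧ v = v₀) := by
    intro v
    constructor
    · rintro ⟨h4, hc, hA⟩
      have hv4 := (rel4_iff x v).1 h4
      have hb' : v.1 b₂ = γ₀ * β₀ := by
        rw [← triple helem v c a₂ b₂ hca hcb hab2, hc, hA]
      refine ⟨fun he => hv4 b₂ (hb'.trans he).symm,
        ext2 helem c a₂ hca (by rw [hc, hvc]) (by rw [hA, hva])⟩
    · rintro ⟨hne, rfl⟩
      refine ⟨?_, hvc, hva⟩
      rw [rel4_iff]; intro d
      rcases cover3 c a₂ b₂ hca hcb hab2 d with hd | hd | hd <;> rw [hd]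
      · rw [hvc]; exact fun he => hγ he.symm
      · rw [hva]; exact fun he => hβ he.symm
      · rw [hvb]; exact fun he => hne he.symm
  simp only [key]
  by_cases hcc : γ₀ * β₀ = x.1 b₂
  · simp [hcc]
  · simp only [hcc, not_false_iff, true_and, if_false]
    rw [Finset.sum_ite_eq' Finset.univ v₀ (fun _ => (1:F))]
    simp

end Help

theorem stmt13 (F : Type) [Field F] (G : Type) [Group G] [Fintype G] [DecidableEq G]
    (helem : ∀ a : G, a ^ 2 = 1) (hcard : 3 ≤ Fintype.card G)
    (x : XG G) (g h i : Fin 5)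
    (hghi : ({g, h, i} : Finset (Fin 5)) = {1, 2, 3})
    (M : Matrix (XG G) (XG G) F)
    (hM : M = DualE F x 4 * Adj F g * DualE F x h * Adj F i * DualE F x 4) :
    (M * (DualE F x 4 * Adj F g * DualE F x h * Adj F i * DualE F x 4) =
      DualE F x 4 * AllOne F G * DualE F x 4 -
        DualE F x 4 * Adj F g * DualE F x h * Adj F i * DualE F x 4) ∧
    (M * (DualE F x 4 * Adj F g * DualE F x i * Adj F h * DualE F x 4) =
      DualE F x 4 * AllOne F G * DualE F x 4 -
        DualE F x 4 * Adj F g * DualE F x i * Adj F h * DualE F x 4) ∧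
    (M * (DualE F x 4 * Adj F h * DualE F x g * Adj F i * DualE F x 4) =
      DualE F x 4 * AllOne F G * DualE F x 4 -
        DualE F x 4 * Adj F g * DualE F x h * Adj F i * DualE F x 4) ∧
    (M * (DualE F x 4 * Adj F h * DualE F x i * Adj F g * DualE F x 4) =
      DualE F x 4 * AllOne F G * DualE F x 4 - DualE F x 4 -
        DualE F x 4 * Adj F g * DualE F x 4) ∧
    (M * (DualE F x 4 * Adj F i * DualE F x g * Adj F h * DualE F x 4) =
      ((Fintype.card G - 2 : ℤ) : F) •
        (DualE F x 4 * Adj F g * DualE F x i * Adj F h * DualE F x 4)) ∧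
    (M * (DualE F x 4 * Adj F i * DualE F x h * Adj F g * DualE F x 4) =
      ((Fintype.card G - 2 : ℤ) : F) • DualE F x 4 +
        ((Fintype.card G - 2 : ℤ) : F) • (DualE F x 4 * Adj F g * DualE F x 4)) := by
  subst hM
  have hfacts : ∀ g h i : Fin 5, ({g, h, i} : Finset (Fin 5)) = {1, 2, 3} →
      g ≠ 0 ∧ g ≠ 4 ∧ h ≠ 0 ∧ h ≠ 4 ∧ i ≠ 0 ∧ i ≠ 4 ∧
      cIdx g ≠ cIdx h ∧ cIdx g ≠ cIdx i ∧ cIdx h ≠ cIdx i := by decide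
  obtain ⟨hg0, hg4, hh0, hh4, hi0, hi4, hab, hac, hbc⟩ := hfacts g h i hghi
  set a := cIdx g with ha'
  set b := cIdx h with hb'
  set c := cIdx i with hc'
  have hn2 : 2 ≤ Fintype.card G := le_trans (by norm_num) hcard
  have ht : x.1 a * x.1 b = x.1 c := triple helem x a b c hab hac hbc
  refine ⟨?_, ?_, ?_, ?_, ?_, ?_⟩
  -- (i)
  · ext y z
    rw [Matrix.mul_apply, Matrix.sub_apply, entryJ]
    simp only [entryN helem x hg0 hg4 hh0 hh4 hi0 hi4 hab hac hbc, ← ha', ← hb', ← hc']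
    by_cases h1 : rel 4 x y
    swap
    · simp [h1]
    by_cases h2 : rel 4 x z
    swap
    · simp [h2]
    simp only [h1, h2, true_and, if_true, mul_ind]
    have hiff : ∀ v : XG G,
        ((rel 4 x v ∧ v.1 c * y.1 a = x.1 b) ∧ rel 4 x v ∧ z.1 c * v.1 a = x.1 b)
        ↔ (rel 4 x v ∧ v.1 c = x.1 b * y.1 a ∧ v.1 a = z.1 c * x.1 b) := by
      intro v
      constructor
      · rintro ⟨⟨h4, hA⟩, -, hB⟩
        exact ⟨h4, (cancel_right helem).1 hA, (cancel_left helem).1 hB⟩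
      · rintro ⟨h4, hA, hB⟩
        exact ⟨⟨h4, (cancel_right helem).2 hA⟩, h4, (cancel_left helem).2 hB⟩
    simp only [hiff]
    rw [sum_unique helem x c a b (Ne.symm hac) (Ne.symm hbc) hab _ _
      (by rw [gcomm helem]; exact hbeta helem x a b c (Ne.symm hbc) (Ne.symm hac) (Ne.symm hab) h1)
      (hbeta helem x c b a hab hac hbc h2)]
    have hcnd : ((x.1 b * y.1 a) * (z.1 c * x.1 b) = x.1 b) ↔ (z.1 c * y.1 a = x.1 b) := by
      rw [eqm helem ((x.1 b * y.1 a) * (z.1 c * x.1 b)) (x.1 b),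
        eqm helem (z.1 c * y.1 a) (x.1 b),
        show (x.1 b * y.1 a) * (z.1 c * x.1 b) * x.1 b = z.1 c * y.1 a * x.1 b from by
          simp only [mul_assoc, gcomm helem, glcomm helem, sq1 helem, sq1' helem, one_mul, mul_one]]
    by_cases hT : z.1 c * y.1 a = x.1 b <;> simp [hcnd, hT]
  -- (ii)
  · ext y z
    rw [Matrix.mul_apply, Matrix.sub_apply, entryJ]
    simp only [entryN helem x hg0 hg4 hh0 hh4 hi0 hi4 hab hac hbc,
      entryN helem x hg0 hg4 hi0 hi4 hh0 hh4 hac hab (Ne.symm hbc), ← ha', ← hb', ← hc']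
    by_cases h1 : rel 4 x y
    swap
    · simp [h1]
    by_cases h2 : rel 4 x z
    swap
    · simp [h2]
    simp only [h1, h2, true_and, if_true, mul_ind]
    have hiff : ∀ v : XG G,
        ((rel 4 x v ∧ v.1 c * y.1 a = x.1 b) ∧ rel 4 x v ∧ z.1 b * v.1 a = x.1 c)
        ↔ (rel 4 x v ∧ v.1 c = x.1 b * y.1 a ∧ v.1 a = z.1 b * x.1 c) := by
      intro v
      constructor
      · rintro ⟨⟨h4, hA⟩, -, hB⟩
        exact ⟨h4, (cancel_right helem).1 hA, (cancel_left helem).1 hB⟩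
      · rintro ⟨h4, hA, hB⟩
        exact ⟨⟨h4, (cancel_right helem).2 hA⟩, h4, (cancel_left helem).2 hB⟩
    simp only [hiff]
    rw [sum_unique helem x c a b (Ne.symm hac) (Ne.symm hbc) hab _ _
      (by rw [gcomm helem]; exact hbeta helem x a b c (Ne.symm hbc) (Ne.symm hac) (Ne.symm hab) h1)
      (hbeta helem x b c a hac hab (Ne.symm hbc) h2)]
    have hcnd : ((x.1 b * y.1 a) * (z.1 b * x.1 c) = x.1 b) ↔ (z.1 b * y.1 a = x.1 c) := by
      rw [eqm helem ((x.1 b * y.1 a) * (z.1 b * x.1 c)) (x.1 b),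
        eqm helem (z.1 b * y.1 a) (x.1 c),
        show (x.1 b * y.1 a) * (z.1 b * x.1 c) * x.1 b = z.1 b * y.1 a * x.1 c from by
          simp only [mul_assoc, gcomm helem, glcomm helem, sq1 helem, sq1' helem, one_mul, mul_one]]
    by_cases hT : z.1 b * y.1 a = x.1 c <;> simp [hcnd, hT]
  -- (iii)
  · ext y z
    rw [Matrix.mul_apply, Matrix.sub_apply, entryJ]
    simp only [entryN helem x hg0 hg4 hh0 hh4 hi0 hi4 hab hac hbc,
      entryN helem x hh0 hh4 hg0 hg4 hi0 hi4 (Ne.symm hab) hbc hac, ← ha', ← hb', ← hc']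
    by_cases h1 : rel 4 x y
    swap
    · simp [h1]
    by_cases h2 : rel 4 x z
    swap
    · simp [h2]
    simp only [h1, h2, true_and, if_true, mul_ind]
    have hiff : ∀ v : XG G,
        ((rel 4 x v ∧ v.1 c * y.1 a = x.1 b) ∧ rel 4 x v ∧ z.1 c * v.1 b = x.1 a)
        ↔ (rel 4 x v ∧ v.1 c = x.1 b * y.1 a ∧ v.1 b = z.1 c * x.1 a) := by
      intro v
      constructor
      · rintro ⟨⟨h4, hA⟩, -, hB⟩
        exact ⟨h4, (cancel_right helem).1 hA, (cancel_left helem).1 hB⟩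
      · rintro ⟨h4, hA, hB⟩
        exact ⟨⟨h4, (cancel_right helem).2 hA⟩, h4, (cancel_left helem).2 hB⟩
    simp only [hiff]
    rw [sum_unique helem x c b a (Ne.symm hbc) (Ne.symm hac) (Ne.symm hab) _ _
      (by rw [gcomm helem]; exact hbeta helem x a b c (Ne.symm hbc) (Ne.symm hac) (Ne.symm hab) h1)
      (hbeta helem x c a b (Ne.symm hab) hbc hac h2)]
    have hcnd : ((x.1 b * y.1 a) * (z.1 c * x.1 a) = x.1 a) ↔ (z.1 c * y.1 a = x.1 b) := by
      rw [eqm helem ((x.1 b * y.1 a) * (z.1 c * x.1 a)) (x.1 a),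
        eqm helem (z.1 c * y.1 a) (x.1 b),
        show (x.1 b * y.1 a) * (z.1 c * x.1 a) * x.1 a = z.1 c * y.1 a * x.1 b from by
          simp only [mul_assoc, gcomm helem, glcomm helem, sq1 helem, sq1' helem, one_mul, mul_one]]
    by_cases hT : z.1 c * y.1 a = x.1 b <;> simp [hcnd, hT]
  -- (iv)
  · ext y z
    rw [Matrix.mul_apply, Matrix.sub_apply, Matrix.sub_apply, entryJ, entryA]
    simp only [entryN helem x hg0 hg4 hh0 hh4 hi0 hi4 hab hac hbc,
      entryN helem x hh0 hh4 hi0 hi4 hg0 hg4 hbc (Ne.symm hab) (Ne.symm hac),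
      entryE, ← ha', ← hb', ← hc']
    by_cases h1 : rel 4 x y
    swap
    · simp [h1]
    by_cases h2 : rel 4 x z
    swap
    · have hyz : y ≠ z := fun he => h2 (he ▸ h1)
      simp [h2, hyz]
    simp only [h1, h2, true_and, and_true, if_true, mul_ind, rel_iff hg0 hg4, ← ha']
    have hiff : ∀ v : XG G,
        ((rel 4 x v ∧ v.1 c * y.1 a = x.1 b) ∧ rel 4 x v ∧ z.1 a * v.1 b = x.1 c)
        ↔ (rel 4 x v ∧ v.1 c = x.1 b * y.1 a ∧ v.1 b = z.1 a * x.1 c) := by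
      intro v
      constructor
      · rintro ⟨⟨h4, hA⟩, -, hB⟩
        exact ⟨h4, (cancel_right helem).1 hA, (cancel_left helem).1 hB⟩
      · rintro ⟨h4, hA, hB⟩
        exact ⟨⟨h4, (cancel_right helem).2 hA⟩, h4, (cancel_left helem).2 hB⟩
    simp only [hiff]
    rw [sum_unique helem x c b a (Ne.symm hbc) (Ne.symm hac) (Ne.symm hab) _ _
      (by rw [gcomm helem]; exact hbeta helem x a b c (Ne.symm hbc) (Ne.symm hac) (Ne.symm hab) h1)
      (hbeta helem x a c b hbc (Ne.symm hab) (Ne.symm hac) h2)]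
    have hcnd : ((x.1 b * y.1 a) * (z.1 a * x.1 c) = x.1 a) ↔ (z.1 a = y.1 a) := by
      rw [eqm helem ((x.1 b * y.1 a) * (z.1 a * x.1 c)) (x.1 a),
        eqm helem (z.1 a) (y.1 a),
        show (x.1 b * y.1 a) * (z.1 a * x.1 c) * x.1 a = z.1 a * y.1 a from by
          rw [show x.1 b = x.1 a * x.1 c from (triple helem x a c b hac hab (Ne.symm hbc)).symm]
          simp only [mul_assoc, gcomm helem, glcomm helem, sq1 helem, sq1' helem, one_mul, mul_one]]
    by_cases hT : z.1 a = y.1 a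
    · rw [if_pos (hcnd.2 hT)]
      by_cases hyz : y = z
      · simp [hyz]
      · simp [hyz, hT.symm]
    · rw [if_neg (fun hh => hT (hcnd.1 hh))]
      have hyz : y ≠ z := fun he => hT (by rw [he])
      have hT' : ¬(y.1 a = z.1 a) := fun hh => hT hh.symm
      simp [hyz, hT']
  -- (v)
  · ext y z
    rw [Matrix.mul_apply, Matrix.smul_apply]
    simp only [entryN helem x hg0 hg4 hh0 hh4 hi0 hi4 hab hac hbc,
      entryN helem x hi0 hi4 hg0 hg4 hh0 hh4 (Ne.symm hac) (Ne.symm hbc) hab,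
      entryN helem x hg0 hg4 hi0 hi4 hh0 hh4 hac hab (Ne.symm hbc), ← ha', ← hb', ← hc']
    by_cases h1 : rel 4 x y
    swap
    · simp [h1]
    by_cases h2 : rel 4 x z
    swap
    · simp [h2]
    simp only [h1, h2, true_and, if_true, mul_ind]
    have hγ : x.1 b * y.1 a ≠ x.1 c := by
      rw [gcomm helem]
      exact hbeta helem x a b c (Ne.symm hbc) (Ne.symm hac) (Ne.symm hab) h1
    have hiff : ∀ v : XG G,
        ((rel 4 x v ∧ v.1 c * y.1 a = x.1 b) ∧ rel 4 x v ∧ z.1 b * v.1 c = x.1 a)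
        ↔ ((z.1 b * (x.1 b * y.1 a) = x.1 a) ∧ (rel 4 x v ∧ v.1 c = x.1 b * y.1 a)) := by
      intro v
      constructor
      · rintro ⟨⟨h4, hA⟩, -, hB⟩
        have hA' := (cancel_right helem).1 hA
        exact ⟨by rw [← hA']; exact hB, h4, hA'⟩
      · rintro ⟨hD, h4, hA'⟩
        exact ⟨⟨h4, (cancel_right helem).2 hA'⟩, h4, by rw [hA']; exact hD⟩
    simp only [hiff]
    have hcnd : (z.1 b * (x.1 b * y.1 a) = x.1 a) ↔ (z.1 b * y.1 a = x.1 c) := by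
      rw [eqm helem (z.1 b * (x.1 b * y.1 a)) (x.1 a),
        eqm helem (z.1 b * y.1 a) (x.1 c), ← ht,
        show z.1 b * (x.1 b * y.1 a) * x.1 a = z.1 b * y.1 a * (x.1 a * x.1 b) from by
          simp only [mul_assoc, gcomm helem, glcomm helem, sq1 helem, sq1' helem, one_mul, mul_one]]
    by_cases hD : z.1 b * (x.1 b * y.1 a) = x.1 a
    · simp only [hD, true_and]
      rw [sum_count helem x hn2 a b c hab hac hbc _ hγ]
      simp [hcnd.1 hD]
    · have hT : ¬(z.1 b * y.1 a = x.1 c) := fun hh => hD (hcnd.2 hh)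
      simp [hD, hT]
  -- (vi)
  · ext y z
    rw [Matrix.mul_apply, Matrix.add_apply, Matrix.smul_apply, Matrix.smul_apply, entryA]
    simp only [entryN helem x hg0 hg4 hh0 hh4 hi0 hi4 hab hac hbc,
      entryN helem x hi0 hi4 hh0 hh4 hg0 hg4 (Ne.symm hbc) (Ne.symm hac) (Ne.symm hab),
      entryE, ← ha', ← hb', ← hc']
    by_cases h1 : rel 4 x y
    swap
    · simp [h1]
    by_cases h2 : rel 4 x z
    swap
    · have hyz : y ≠ z := fun he => h2 (he ▸ h1)
      simp [h2, hyz]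
    simp only [h1, h2, true_and, and_true, if_true, mul_ind, rel_iff hg0 hg4, ← ha']
    have hγ : x.1 b * y.1 a ≠ x.1 c := by
      rw [gcomm helem]
      exact hbeta helem x a b c (Ne.symm hbc) (Ne.symm hac) (Ne.symm hab) h1
    have hiff : ∀ v : XG G,
        ((rel 4 x v ∧ v.1 c * y.1 a = x.1 b) ∧ rel 4 x v ∧ z.1 a * v.1 c = x.1 b)
        ↔ ((z.1 a * (x.1 b * y.1 a) = x.1 b) ∧ (rel 4 x v ∧ v.1 c = x.1 b * y.1 a)) := by
      intro v
      constructor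
      · rintro ⟨⟨h4, hA⟩, -, hB⟩
        have hA' := (cancel_right helem).1 hA
        exact ⟨by rw [← hA']; exact hB, h4, hA'⟩
      · rintro ⟨hD, h4, hA'⟩
        exact ⟨⟨h4, (cancel_right helem).2 hA'⟩, h4, by rw [hA']; exact hD⟩
    simp only [hiff]
    have hcnd : (z.1 a * (x.1 b * y.1 a) = x.1 b) ↔ (z.1 a = y.1 a) := by
      rw [eqm helem (z.1 a * (x.1 b * y.1 a)) (x.1 b),
        eqm helem (z.1 a) (y.1 a),
        show z.1 a * (x.1 b * y.1 a) * x.1 b = z.1 a * y.1 a from by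
          simp only [mul_assoc, gcomm helem, glcomm helem, sq1 helem, sq1' helem, one_mul, mul_one]]
    by_cases hD : z.1 a * (x.1 b * y.1 a) = x.1 b
    · simp only [hD, true_and]
      rw [sum_count helem x hn2 a b c hab hac hbc _ hγ]
      have hT := hcnd.1 hD
      by_cases hyz : y = z
      · simp [hyz]
      · simp [hyz, hT.symm]
    · have hT : ¬(z.1 a = y.1 a) := fun hh => hD (hcnd.2 hh)
      have hyz : y ≠ z := fun he => hT (by rw [he])
      have hT' : ¬(y.1 a = z.1 a) := fun hh => hT hh.symm
      simp [hD, hyz, hT']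
end
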